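/- arXiv:2601.19758 — 2 statements merged into one kernel-verified Lean document; each statement's English description precedes it below -/
import Mathlib

section
/- Let G be a group, ω a 2-cocycle on G, λ^ω the twisted left regular representation on ℓ²(G), and let C*_r(G,ω) be the operator-norm closure, inside the bounded operators on ℓ²(G), of the unital star subalgebra generated by {λ^ω_g : g ∈ G}. Then the vector state τ(a) = ⟨δ_e, a δ_e⟩ is tracial on C*_r(G,ω): for all a, b ∈ C*_r(G,ω), one has ⟨δ_e, a(b δ_e)⟩ = ⟨δ_e, b(a δ_e)⟩. -/
/-- A 2-cocycle on a group `G`: a circle-valued map satisfying the cocycle identity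
and normalised at the identity. -/
def IsTwoCocycle {G : Type*} [Group G] (ω : G → G → ℂ) : Prop :=
  (∀ x y : G, ‖ω x y‖ = 1) ∧
  (∀ x y z : G, ω y z * ω x (y * z) = ω x y * ω (x * y) z) ∧
  (∀ x : G, ω x 1 = 1) ∧ (∀ y : G, ω 1 y = 1)

/-- The reduced twisted group C*-algebra: the operator-norm closure, inside the bounded
operators on `ℓ²(G)`, of the unital star subalgebra generated by the twisted left regular
representation `{λ^ω_g : g ∈ G}` (here given by the family of unitaries `U`). -/
noncomputable def reducedTwistedGroupCstarAlgebra {G : Type*} [Group G]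
    (U : G → (lp (fun _ : G => ℂ) 2 ≃ₗᵢ[ℂ] lp (fun _ : G => ℂ) 2)) :
    StarSubalgebra ℂ (lp (fun _ : G => ℂ) 2 →L[ℂ] lp (fun _ : G => ℂ) 2) :=
  (StarAlgebra.adjoin ℂ
    {T : lp (fun _ : G => ℂ) 2 →L[ℂ] lp (fun _ : G => ℂ) 2 |
      ∃ g : G, ∀ ξ : lp (fun _ : G => ℂ) 2, T ξ = U g ξ}).topologicalClosure

/-! The twisted translations satisfy `λ_g λ_h = ω(g,h) λ_{gh}`, so the vector state `τ` at `δ_e`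
takes the value `ω(g,h)` on `λ_g λ_h` when `gh = e` and `0` otherwise; since `gh = e ↔ hg = e` and
the cocycle identity at `(g, g⁻¹, g)` gives `ω(g,g⁻¹) = ω(g⁻¹,g)`, we get `τ(λ_g λ_h) = τ(λ_h λ_g)`.
The same product formula, together with `λ_g* = λ_g⁻¹ = ω(g,g⁻¹)⁻¹ λ_{g⁻¹}`, shows that the linear
span of the `λ_g` is a star subalgebra, so it contains the algebra they generate. The identity
`τ(xy) = τ(yx)` extends to the span by bilinearity, and to its norm closure because
`(x, y) ↦ τ(xy)` is jointly continuous. -/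

open Submodule in
theorem StarAlgebra.adjoin_subset_span {R A : Type*} [CommSemiring R] [StarRing R] [Semiring A]
    [StarRing A] [Algebra R A] [StarModule R A] {s : Set A} (h_one : 1 ∈ span R s)
    (h_mul : ∀ x ∈ s, ∀ y ∈ s, x * y ∈ span R s) (h_star : ∀ x ∈ s, star x ∈ span R s) :
    (adjoin R s : Set A) ⊆ span R s := by
  have h_mul_span : ∀ x y, x ∈ span R s → y ∈ span R s → x * y ∈ span R s := fun x y hx hy =>
    span_le.2 (Set.mul_subset_iff.2 h_mul) (span_mul_span R s s ▸ mul_mem_mul hx hy)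
  refine Algebra.adjoin_le (S := (span R s).toSubalgebra h_one h_mul_span)
    (Set.union_subset subset_span fun x hx => ?_)
  simpa using h_star _ hx

theorem map_mul_comm_of_mem_span {R A M : Type*} [CommSemiring R] [Semiring A] [Algebra R A]
    [AddCommMonoid M] [Module R M] (f : A →ₗ[R] M) {s : Set A}
    (h : ∀ x ∈ s, ∀ y ∈ s, f (x * y) = f (y * x)) {x y : A}
    (hx : x ∈ Submodule.span R s) (hy : y ∈ Submodule.span R s) : f (x * y) = f (y * x) := by
  induction hx, hy using Submodule.span_induction₂ with
  | mem_mem x y hx hy => exact h x hx y hy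
  | zero_left | zero_right => simp
  | add_left | add_right => simp only [add_mul, mul_add, map_add, *]
  | smul_left | smul_right => simp only [smul_mul_assoc, mul_smul_comm, map_smul, *]

theorem map_mul_comm_of_mem_closure {A B : Type*} [Mul A] [TopologicalSpace A] [ContinuousMul A]
    [TopologicalSpace B] [T2Space B] {f : A → B} (hf : Continuous f) {s : Set A}
    (h : ∀ x ∈ s, ∀ y ∈ s, f (x * y) = f (y * x)) {x y : A}
    (hx : x ∈ closure s) (hy : y ∈ closure s) : f (x * y) = f (y * x) := by
  have h_closed : IsClosed {p : A × A | f (p.1 * p.2) = f (p.2 * p.1)} :=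
    isClosed_eq (by fun_prop) (by fun_prop)
  have h_sub : s ×ˢ s ⊆ {p : A × A | f (p.1 * p.2) = f (p.2 * p.1)} :=
    fun p hp => h p.1 hp.1 p.2 hp.2
  have h_mem : (x, y) ∈ closure (s ×ˢ s) := by rw [closure_prod_eq]; exact ⟨hx, hy⟩
  exact closure_minimal h_sub h_closed h_mem

theorem lp.ext_single_one {ι 𝕜 F : Type*} [NormedField 𝕜] [DecidableEq ι] {p : ENNReal}
    [Fact (1 ≤ p)] (hp : p ≠ ⊤) [AddCommMonoid F] [Module 𝕜 F] [TopologicalSpace F] [T2Space F]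
    {f g : lp (fun _ : ι => 𝕜) p →L[𝕜] F} (h : ∀ i, f (lp.single p i 1) = g (lp.single p i 1)) :
    f = g :=
  lp.ext_continuousLinearMap hp fun i => ContinuousLinearMap.ext_ring (h i)

namespace IsTwoCocycle

variable {G : Type*} [Group G] {ω : G → G → ℂ}

theorem ne_zero (hω : IsTwoCocycle ω) (x y : G) : ω x y ≠ 0 :=
  norm_ne_zero_iff.1 (by simp [hω.1 x y])

theorem apply_inv_comm (hω : IsTwoCocycle ω) (g : G) : ω g g⁻¹ = ω g⁻¹ g := by
  simpa [hω.2.2.1, hω.2.2.2] using (hω.2.1 g g⁻¹ g).symm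

end IsTwoCocycle

def IsTwistedLeftRegular {G : Type*} [Group G] [DecidableEq G] (ω : G → G → ℂ)
    (U : G → (lp (fun _ : G => ℂ) 2 ≃ₗᵢ[ℂ] lp (fun _ : G => ℂ) 2)) : Prop :=
  ∀ g h : G, U g (lp.single 2 h 1) = ω g h • lp.single 2 (g * h) 1

section TwistedLeftRegular

variable {G : Type*} [Group G] [DecidableEq G]

local notation "ℓ²[" G "]" => lp (fun _ : G => ℂ) 2

local notation "𝔹[" G "]" => lp (fun _ : G => ℂ) 2 →L[ℂ] lp (fun _ : G => ℂ) 2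

local notation "δ₁[" G "]" => lp.single 2 (1 : G) (1 : ℂ)

variable (G) in
noncomputable def canonicalTrace : (𝔹[G]) →L[ℂ] ℂ :=
  (innerSL ℂ δ₁[G]).comp (ContinuousLinearMap.apply ℂ ℓ²[G] δ₁[G])

theorem canonicalTrace_apply (x : 𝔹[G]) : canonicalTrace G x = inner ℂ δ₁[G] (x δ₁[G]) :=
  rfl

variable {ω : G → G → ℂ} {U : G → (ℓ²[G] ≃ₗᵢ[ℂ] ℓ²[G])}

namespace IsTwistedLeftRegular

theorem mul (hω : IsTwoCocycle ω) (hU : IsTwistedLeftRegular ω U) (g h : G) :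
    (U g : 𝔹[G]) * U h = ω g h • (U (g * h) : 𝔹[G]) := by
  apply lp.ext_single_one (p := 2) ENNReal.ofNat_ne_top
  intro k
  change U g (U h _) = ω g h • U (g * h) _
  rw [hU h k, map_smul, hU g (h * k), hU (g * h) k, smul_smul, smul_smul, hω.2.1, mul_assoc]

theorem one_eq (hω : IsTwoCocycle ω) (hU : IsTwistedLeftRegular ω U) :
    (U 1 : 𝔹[G]) = 1 := by
  apply lp.ext_single_one (p := 2) ENNReal.ofNat_ne_top
  intro k
  simp [hU 1 k, hω.2.2.2]

theorem star_eq (hω : IsTwoCocycle ω) (hU : IsTwistedLeftRegular ω U) (g : G) :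
    star (U g : 𝔹[G]) = (ω g g⁻¹)⁻¹ • U g⁻¹ := by
  have h_unitary : star (U g : 𝔹[G]) * (U g : 𝔹[G]) = 1 := by
    ext
    simp
  calc star (U g : 𝔹[G])
      = (ω g g⁻¹)⁻¹ • (star (U g : 𝔹[G]) * (ω g g⁻¹ • 1)) := by
        rw [mul_smul_comm, mul_one, inv_smul_smul₀ (hω.ne_zero g g⁻¹)]
    _ = (ω g g⁻¹)⁻¹ • (star (U g : 𝔹[G]) * (U g * U g⁻¹)) := by
        rw [hU.mul hω, mul_inv_cancel, hU.one_eq hω]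
    _ = (ω g g⁻¹)⁻¹ • (U g⁻¹ : 𝔹[G]) := by rw [← mul_assoc, h_unitary, one_mul]

theorem canonicalTrace_eq (hω : IsTwoCocycle ω) (hU : IsTwistedLeftRegular ω U) (g : G) :
    canonicalTrace G (U g : 𝔹[G]) = if g = 1 then 1 else 0 := by
  simp [canonicalTrace_apply, hU g 1, hω.2.2.1, lp.inner_single_left, lp.single_apply,
    Pi.single_apply, eq_comm]

theorem canonicalTrace_mul_comm (hω : IsTwoCocycle ω) (hU : IsTwistedLeftRegular ω U) (g h : G) :
    canonicalTrace G ((U g : 𝔹[G]) * U h) = canonicalTrace G ((U h : 𝔹[G]) * U g) := by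
  simp only [hU.mul hω, map_smul, hU.canonicalTrace_eq hω, smul_eq_mul]
  rcases eq_or_ne h g⁻¹ with rfl | hne
  · simp [hω.apply_inv_comm]
  · have hgh : g * h ≠ 1 := fun e => hne (mul_eq_one_iff_inv_eq.1 e).symm
    have hhg : h * g ≠ 1 := fun e => hne (mul_eq_one_iff_eq_inv.1 e)
    simp [hgh, hhg]

theorem adjoin_subset_span (hω : IsTwoCocycle ω) (hU : IsTwistedLeftRegular ω U) :
    (StarAlgebra.adjoin ℂ (Set.range fun g => (U g : 𝔹[G])) : Set 𝔹[G]) ⊆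
      Submodule.span ℂ (Set.range fun g => (U g : 𝔹[G])) := by
  have h_mem (c : ℂ) (g : G) :
      c • (U g : 𝔹[G]) ∈ Submodule.span ℂ (Set.range fun g => (U g : 𝔹[G])) :=
    Submodule.smul_mem _ c (Submodule.subset_span ⟨g, rfl⟩)
  refine StarAlgebra.adjoin_subset_span ?_ ?_ ?_
  · simpa [hU.one_eq hω] using h_mem 1 1
  · rintro _ ⟨g, rfl⟩ _ ⟨h, rfl⟩
    simpa only [hU.mul hω] using h_mem (ω g h) (g * h)
  · rintro _ ⟨g, rfl⟩
    simpa only [hU.star_eq hω] using h_mem _ g⁻¹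

end IsTwistedLeftRegular

end TwistedLeftRegular

theorem canonical_trace_is_tracial
    {G : Type*} [Group G] [DecidableEq G] (ω : G → G → ℂ) (hω : IsTwoCocycle ω)
    (U : G → (lp (fun _ : G => ℂ) 2 ≃ₗᵢ[ℂ] lp (fun _ : G => ℂ) 2))
    (hU : ∀ g h : G, U g (lp.single 2 h 1) = ω g h • lp.single 2 (g * h) 1) :
    ∀ a ∈ reducedTwistedGroupCstarAlgebra U, ∀ b ∈ reducedTwistedGroupCstarAlgebra U,
      inner (𝕜 := ℂ) (lp.single 2 (1 : G) 1) (a (b (lp.single 2 (1 : G) 1))) =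
        inner (𝕜 := ℂ) (lp.single 2 (1 : G) 1) (b (a (lp.single 2 (1 : G) 1))) := by
  have hU : IsTwistedLeftRegular ω U := hU
  have h_gens : {T : lp (fun _ : G => ℂ) 2 →L[ℂ] lp (fun _ : G => ℂ) 2 |
      ∃ g : G, ∀ ξ : lp (fun _ : G => ℂ) 2, T ξ = U g ξ} =
      Set.range fun g => (U g : _ →L[ℂ] _) := by
    ext T
    simp [ContinuousLinearMap.ext_iff, eq_comm]
  intro a ha b hb
  rw [reducedTwistedGroupCstarAlgebra, h_gens] at ha hb
  exact map_mul_comm_of_mem_closure (canonicalTrace G).continuous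
    (fun x hx y hy => map_mul_comm_of_mem_span (canonicalTrace G).toLinearMap
      (by rintro _ ⟨g, rfl⟩ _ ⟨h, rfl⟩; exact hU.canonicalTrace_mul_comm hω g h)
      (hU.adjoin_subset_span hω hx) (hU.adjoin_subset_span hω hy)) ha hb
end

section
/- Let G be a group, ω a 2-cocycle on G, λ^ω the twisted left regular representation on ℓ²(G), and let C*_r(G,ω) be the operator-norm closure, inside the bounded operators on ℓ²(G), of the unital star subalgebra generated by {λ^ω_g : g ∈ G}. Then the canonical trace τ(a) = ⟨δ_e, a δ_e⟩ is faithful on C*_r(G,ω): for every a ∈ C*_r(G,ω), if a(δ_e) = 0 (equivalently τ(a*a) = 0), then a = 0. -/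
open scoped ENNReal

namespace lp

variable {α 𝕜 : Type*} [NormedField 𝕜] {p : ℝ≥0∞}

theorem memℓp_weightedComp (hp : 0 < p.toReal) {c : α → 𝕜} (hc : ∀ x, ‖c x‖ = 1) (e : α ≃ α)
    (f : lp (fun _ : α => 𝕜) p) : Memℓp (fun x => c x * f (e x)) p := by
  refine memℓp_gen ?_
  simp only [norm_mul, hc, one_mul]
  exact (e.summable_iff (f := fun x => ‖f x‖ ^ p.toReal)).2 ((lp.memℓp f).summable hp)

variable [Fact (1 ≤ p)]

noncomputable def weightedComp (hp : p ≠ ⊤) {c : α → 𝕜} (hc : ∀ x, ‖c x‖ = 1) (e : α ≃ α) :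
    lp (fun _ : α => 𝕜) p →ₗᵢ[𝕜] lp (fun _ : α => 𝕜) p where
  toFun f := ⟨fun x => c x * f (e x),
    memℓp_weightedComp (ENNReal.toReal_pos (zero_lt_one.trans_le Fact.out).ne' hp) hc e f⟩
  map_add' f g := by ext x; exact mul_add _ _ _
  map_smul' a f := by ext x; exact mul_left_comm _ _ _
  norm_map' f := by
    have hp' := ENNReal.toReal_pos (zero_lt_one.trans_le (Fact.out : 1 ≤ p)).ne' hp
    rw [lp.norm_eq_tsum_rpow hp', lp.norm_eq_tsum_rpow hp']
    simp only [LinearMap.coe_mk, AddHom.coe_mk, norm_mul, hc, one_mul]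
    exact congrArg (· ^ (1 / p.toReal)) (e.tsum_eq fun x => ‖f x‖ ^ p.toReal)

@[simp]
theorem coeFn_weightedComp (hp : p ≠ ⊤) {c : α → 𝕜} (hc : ∀ x, ‖c x‖ = 1) (e : α ≃ α)
    (f : lp (fun _ : α => 𝕜) p) : ⇑(weightedComp hp hc e f) = fun x => c x * f (e x) :=
  rfl

theorem weightedComp_single [DecidableEq α] (hp : p ≠ ⊤) {c : α → 𝕜} (hc : ∀ x, ‖c x‖ = 1)
    (e : α ≃ α) (i : α) (a : 𝕜) :
    weightedComp hp hc e (lp.single p i a) = c (e.symm i) • lp.single p (e.symm i) a := by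
  ext x
  rcases eq_or_ne x (e.symm i) with rfl | hx
  · simp
  · have hex : e x ≠ i := e.eq_symm_apply.not.mp hx
    simp [Pi.single_eq_of_ne hx, Pi.single_eq_of_ne hex]

theorem ext_continuousLinearMap_single [DecidableEq α] (hp : p ≠ ⊤)
    {F : Type*} [AddCommMonoid F] [Module 𝕜 F] [TopologicalSpace F] [T2Space F]
    {A B : lp (fun _ : α => 𝕜) p →L[𝕜] F} (h : ∀ i, A (lp.single p i 1) = B (lp.single p i 1)) :
    A = B :=
  lp.ext_continuousLinearMap hp fun i => ContinuousLinearMap.ext_ring (h i)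

end lp

theorem Commute.star_left_of_mem_unitary {R : Type*} [Monoid R] [StarMul R] {u x : R}
    (hu : u ∈ unitary R) (h : Commute u x) : Commute (star u) x := by
  simpa [← Unitary.star_eq_inv] using Commute.units_inv_left (u := Unitary.toUnits ⟨u, hu⟩) h

open scoped lp

section TwistedGroupAlgebra

variable {G : Type*} [Group G]

theorem commute_of_mem_reducedTwistedGroupCstarAlgebra
    {U : G → ℓ²(G, ℂ) ≃ₗᵢ[ℂ] ℓ²(G, ℂ)} {T : ℓ²(G, ℂ) →L[ℂ] ℓ²(G, ℂ)}
    (hT : ∀ g, Commute ((U g : ℓ²(G, ℂ) ≃L[ℂ] ℓ²(G, ℂ)) : ℓ²(G, ℂ) →L[ℂ] ℓ²(G, ℂ)) T)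
    {a : ℓ²(G, ℂ) →L[ℂ] ℓ²(G, ℂ)} (ha : a ∈ reducedTwistedGroupCstarAlgebra U) :
    Commute a T := by
  have hT_mem : T ∈ StarSubalgebra.centralizer ℂ
      {S : ℓ²(G, ℂ) →L[ℂ] ℓ²(G, ℂ) | ∃ g : G, ∀ ξ, S ξ = U g ξ} := by
    rw [StarSubalgebra.mem_centralizer_iff]
    rintro S ⟨g, hS⟩
    obtain rfl : S = ((U g : ℓ²(G, ℂ) ≃L[ℂ] ℓ²(G, ℂ)) : ℓ²(G, ℂ) →L[ℂ] ℓ²(G, ℂ)) :=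
      ContinuousLinearMap.ext hS
    exact ⟨hT g, (hT g).star_left_of_mem_unitary (Unitary.linearIsometryEquiv.symm (U g)).prop⟩
  have ha' := StarSubalgebra.topologicalClosure_adjoin_le_centralizer_centralizer ℂ _ ha
  exact ((StarSubalgebra.mem_centralizer_iff ℂ).1 ha' T hT_mem).1.symm

noncomputable def twistedRightRegular (ω : G → G → ℂ) (hω : ∀ x y, ‖ω x y‖ = 1) (h : G) :
    ℓ²(G, ℂ) →ₗᵢ[ℂ] ℓ²(G, ℂ) :=
  lp.weightedComp (by norm_num) (c := fun x => ω (x * h⁻¹) h) (fun _ => hω _ _)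
    (Equiv.mulRight h⁻¹)

variable [DecidableEq G] {ω : G → G → ℂ} (hω : ∀ x y, ‖ω x y‖ = 1)

theorem twistedRightRegular_single (h g : G) :
    twistedRightRegular ω hω h (lp.single 2 g 1) = ω g h • lp.single 2 (g * h) 1 := by
  simp [twistedRightRegular, lp.weightedComp_single]

theorem commute_twistedRightRegular (hcoc : ∀ x y z, ω y z * ω x (y * z) = ω x y * ω (x * y) z)
    {U : G → ℓ²(G, ℂ) ≃ₗᵢ[ℂ] ℓ²(G, ℂ)}
    (hU : ∀ g h : G, U g (lp.single 2 h 1) = ω g h • lp.single 2 (g * h) 1) (g h : G) :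
    Commute ((U g : ℓ²(G, ℂ) ≃L[ℂ] ℓ²(G, ℂ)) : ℓ²(G, ℂ) →L[ℂ] ℓ²(G, ℂ))
      (twistedRightRegular ω hω h).toContinuousLinearMap := by
  refine lp.ext_continuousLinearMap_single (by norm_num) fun k => ?_
  simp [hU, twistedRightRegular_single, smul_smul, hcoc, mul_assoc]

end TwistedGroupAlgebra

theorem canonical_trace_is_faithful
    {G : Type*} [Group G] [DecidableEq G] (ω : G → G → ℂ) (hω : IsTwoCocycle ω)
    (U : G → (lp (fun _ : G => ℂ) 2 ≃ₗᵢ[ℂ] lp (fun _ : G => ℂ) 2))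
    (hU : ∀ g h : G, U g (lp.single 2 h 1) = ω g h • lp.single 2 (g * h) 1) :
    ∀ a ∈ reducedTwistedGroupCstarAlgebra U, a (lp.single 2 (1 : G) 1) = 0 → a = 0 := by
  obtain ⟨hnorm, hcoc, -, hone⟩ := hω
  intro a ha ha0
  refine lp.ext_continuousLinearMap_single (by norm_num) fun h => ?_
  let ρ := (twistedRightRegular ω hnorm h).toContinuousLinearMap
  have hρ : ρ (lp.single 2 1 1) = lp.single 2 h 1 := by
    simp [ρ, twistedRightRegular_single, hone]
  have hcomm : Commute a ρ :=
    commute_of_mem_reducedTwistedGroupCstarAlgebra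
      (fun g => commute_twistedRightRegular hnorm hcoc hU g h) ha
  calc a (lp.single 2 h 1) = (a * ρ) (lp.single 2 1 1) := by rw [← hρ]; rfl
    _ = ρ (a (lp.single 2 1 1)) := by rw [hcomm.eq]; rfl
    _ = 0 := by rw [ha0, map_zero]
end
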